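/- Dual-basis thickening: let (H_X, H_Z) be a CSS code with k logical qubits, having at least one X logical operator and at least one Z logical operator, with distances d_X and d_Z, and let H_C ∈ F₂^{(n_c−k_c) × n_c} be a classical parity check matrix of full row rank with ker(H_C) ≠ {0}; let d_c be the minimum Hamming weight of a nonzero element of ker(H_C) and k_c = dim ker(H_C). Define H''_Z = ( H_Z ⊗ I_{n_c} | I_{n_Z} ⊗ H_Cᵀ ) and H''_X = the block matrix with first block row ( H_X ⊗ I_{n_c} | 0 ) and second block row ( I_n ⊗ H_C | H_Zᵀ ⊗ I_{n_c−k_c} ). Then H''_X · (H''_Z)ᵀ = 0; the resulting CSS code has k·k_c logical qubits, its Z distance (minimum Hamming weight over ker(H''_X) \ rowspan(H''_Z)) equals d_Z · d_c, and its X distance (minimum Hamming weight over ker(H''_Z) \ rowspan(H''_X)) equals d_X. -/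

import Mathlib

/-!
Write a vector on the qubits of the thickened code as a pair `(X, Y)` of an `n × n_c` and an
`n_Z × (n_c - k_c)` matrix. Then `ker H''_X = {H_X X = 0, X H_Cᵀ = H_Zᵀ Y}`,
`ker H''_Z = {H_Z X = Y H_C}`, `rowspan H''_Z = {(H_Zᵀ M, M H_Cᵀ)}` and
`rowspan H''_X = {(H_Xᵀ A + B H_C, H_Z B)}`. Since `H_C` has full row rank it has a right
inverse `R`, and correcting by `R` shows:

* `(X, Y) ∈ ker H''_X` lies in `rowspan H''_Z` iff every column of `X` lies in `rowspan H_Z`.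
  Hence the classes of the columns of `X` identify `ker H''_X / rowspan H''_Z` with the
  `ker H_X / rowspan H_Z`-valued solutions of `H_C λ = 0`, of dimension `k k_c`. For a Z logical
  `(X, Y)` some column is a Z logical of the base code; a `φ ∈ ker H_Z` detecting it gives the
  nonzero codeword `φᵀ X` of `H_C`, all of whose support indexes such columns: weight `≥ d_Z d_c`.
* `(X, Y) ∈ ker H''_Z` lies in `rowspan H''_X` iff `X κ ∈ rowspan H_X` for all `κ ∈ ker H_C`.
  So an X logical gives an X logical `X κ` of the base code, of weight at most `wt X`.

The bounds are attained by `(v κᵀ, 0)`, with `v` a minimum weight logical operator and `κ` a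
minimum weight codeword of `H_C`, respectively a unit vector inside the support of one.
-/

open Matrix

/-- The `F₂`-span of the rows of a matrix. -/
noncomputable def rowSpan {ι κ : Type*} [Fintype ι] [Fintype κ] (M : Matrix ι κ (ZMod 2)) :
    Submodule (ZMod 2) (κ → ZMod 2) :=
  Submodule.span (ZMod 2) (Set.range fun i => M i)

/-- The kernel `{v : M v = 0}` of a matrix, as a submodule. -/
noncomputable def kerMat {ι κ : Type*} [Fintype ι] [Fintype κ] (M : Matrix ι κ (ZMod 2)) :
    Submodule (ZMod 2) (κ → ZMod 2) :=
  LinearMap.ker M.mulVecLin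

/-- Number of logical qubits of a CSS code: `dim (ker H_X / rowspan H_Z)`
(the quotient of the kernel by the intersection of the row span with the kernel,
which agrees with `ker/rowspan` when `rowspan ⊆ ker`). -/
noncomputable def logicalDim {ι₁ ι₂ κ : Type*} [Fintype ι₁] [Fintype ι₂] [Fintype κ]
    (HX : Matrix ι₁ κ (ZMod 2)) (HZ : Matrix ι₂ κ (ZMod 2)) : ℕ :=
  Module.finrank (ZMod 2) (↥(kerMat HX) ⧸ (rowSpan HZ).comap (kerMat HX).subtype)

/-- The logical operators `ker(Hker) \ rowspan(Hspan)`. -/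
def logicalSet {ι₁ ι₂ κ : Type*} [Fintype ι₁] [Fintype ι₂] [Fintype κ]
    (Hker : Matrix ι₁ κ (ZMod 2)) (Hspan : Matrix ι₂ κ (ZMod 2)) : Set (κ → ZMod 2) :=
  {v | Hker.mulVec v = 0 ∧ v ∉ rowSpan Hspan}

/-- Minimum Hamming weight over a set of vectors. -/
noncomputable def minWt {ι : Type*} [Fintype ι] (S : Set (ι → ZMod 2)) : ℕ :=
  sInf (hammingNorm '' S)

/-- Z check matrix of the dual-basis thickened code: `( H_Z ⊗ I_{n_c} | I_{n_Z} ⊗ H_Cᵀ )`. -/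
def dualThickZ {nZ n r nc : ℕ} (HZ : Matrix (Fin nZ) (Fin n) (ZMod 2))
    (HC : Matrix (Fin r) (Fin nc) (ZMod 2)) :
    Matrix (Fin nZ × Fin nc) ((Fin n × Fin nc) ⊕ (Fin nZ × Fin r)) (ZMod 2) :=
  Matrix.of fun s p =>
    match p with
    | Sum.inl (i, c) => if c = s.2 then HZ s.1 i else 0
    | Sum.inr (z, j) => if z = s.1 then HC j s.2 else 0

/-- X check matrix of the dual-basis thickened code:
first block row `( H_X ⊗ I_{n_c} | 0 )`,
second block row `( I_n ⊗ H_C | H_Zᵀ ⊗ I_{n_c-k_c} )`. -/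
def dualThickX {nX nZ n r nc : ℕ} (HX : Matrix (Fin nX) (Fin n) (ZMod 2))
    (HZ : Matrix (Fin nZ) (Fin n) (ZMod 2)) (HC : Matrix (Fin r) (Fin nc) (ZMod 2)) :
    Matrix ((Fin nX × Fin nc) ⊕ (Fin n × Fin r)) ((Fin n × Fin nc) ⊕ (Fin nZ × Fin r)) (ZMod 2) :=
  Matrix.of fun s p =>
    match s, p with
    | Sum.inl (a, c), Sum.inl (i, c') => if c' = c then HX a i else 0
    | Sum.inl _, Sum.inr _ => 0
    | Sum.inr (i, j), Sum.inl (i', c) => if i' = i then HC j c else 0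
    | Sum.inr (i, j), Sum.inr (z, j') => if j' = j then HZ z i else 0

section Generic

variable {ι ι' κ : Type*} [Fintype ι] [Fintype κ]

theorem mem_rowSpan_iff {M : Matrix ι κ (ZMod 2)} {v : κ → ZMod 2} :
    v ∈ rowSpan M ↔ ∃ x, x ᵥ* M = v := by
  simp only [rowSpan, Submodule.mem_span_range_iff_exists_fun, vecMul_eq_sum]

theorem minWt_le {S : Set (ι → ZMod 2)} {v : ι → ZMod 2} (hv : v ∈ S) :
    minWt S ≤ hammingNorm v :=
  Nat.sInf_le ⟨v, hv, rfl⟩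

theorem le_minWt {S : Set (ι → ZMod 2)} {m : ℕ} (hS : S.Nonempty)
    (h : ∀ v ∈ S, m ≤ hammingNorm v) : m ≤ minWt S :=
  le_csInf (hS.image _) (by rintro _ ⟨v, hv, rfl⟩; exact h v hv)

theorem exists_hammingNorm_eq_minWt {S : Set (ι → ZMod 2)} (hS : S.Nonempty) :
    ∃ v ∈ S, hammingNorm v = minWt S :=
  Nat.sInf_mem (hS.image _)

theorem vecMul_mem_rowSpan (M : Matrix ι κ (ZMod 2)) (x : ι → ZMod 2) : x ᵥ* M ∈ rowSpan M :=
  mem_rowSpan_iff.2 ⟨x, rfl⟩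

theorem mem_kerMat_iff {M : Matrix ι κ (ZMod 2)} {v : κ → ZMod 2} :
    v ∈ kerMat M ↔ M *ᵥ v = 0 :=
  Iff.rfl

theorem transpose_mul_apply_eq_mulVec {α l m n : Type*} [NonUnitalNonAssocSemiring α] [Fintype m]
    (A : Matrix l m α) (B : Matrix m n α) (j : n) : (A * B)ᵀ j = A *ᵥ Bᵀ j :=
  rfl

theorem transpose_vecMulVec_apply {α m n : Type*} [CommMagma α] (v : m → α) (w : n → α) (j : n) :
    (vecMulVec v w)ᵀ j = w j • v := by
  ext i
  simp [vecMulVec_apply, mul_comm]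

theorem forall_col_mem_rowSpan_iff {M : Matrix ι κ (ZMod 2)} {N : Matrix κ ι' (ZMod 2)} :
    (∀ j, Nᵀ j ∈ rowSpan M) ↔ ∃ A : Matrix ι ι' (ZMod 2), Mᵀ * A = N := by
  refine ⟨fun h => ?_, ?_⟩
  · choose A hA using fun j => mem_rowSpan_iff.1 (h j)
    refine ⟨(Matrix.of A)ᵀ, ?_⟩
    ext k j
    rw [← transpose_apply N, ← hA j]
    simp [mul_apply, vecMul, dotProduct, mul_comm]
  · rintro ⟨A, rfl⟩ j
    rw [transpose_mul_apply_eq_mulVec, mulVec_transpose]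
    exact vecMul_mem_rowSpan M _

theorem mem_rowSpan_iff_forall_dotProduct_eq_zero {M : Matrix ι κ (ZMod 2)} {x : κ → ZMod 2} :
    x ∈ rowSpan M ↔ ∀ φ, M *ᵥ φ = 0 → φ ⬝ᵥ x = 0 := by
  classical
  refine ⟨?_, fun h => by_contra fun hx => ?_⟩
  · rintro hx φ hφ
    obtain ⟨y, rfl⟩ := mem_rowSpan_iff.1 hx
    rw [dotProduct_comm, ← dotProduct_mulVec, hφ, dotProduct_zero]
  · obtain ⟨f, hfx, hf⟩ := Submodule.exists_dual_map_eq_bot_of_notMem hx inferInstance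
    obtain ⟨φ, rfl⟩ := (dotProductEquiv (ZMod 2) κ).surjective f
    refine hfx (h φ (funext fun i => ?_))
    have : φ ⬝ᵥ M i ∈ (rowSpan M).map (dotProductEquiv (ZMod 2) κ φ) :=
      Submodule.mem_map_of_mem (Submodule.subset_span ⟨i, rfl⟩)
    rwa [hf, Submodule.mem_bot, dotProduct_comm] at this

theorem exists_mul_eq_one_of_linearIndependent_row {K m n : Type*} [Field K] [Fintype m]
    [Fintype n] [DecidableEq m] {H : Matrix m n K}
    (h : LinearIndependent K H.row) : ∃ R : Matrix n m K, H * R = 1 := by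
  classical
  have hsurj : LinearMap.range H.mulVecLin = ⊤ := by
    apply Submodule.eq_top_of_finrank_eq
    rw [← Matrix.rank, h.rank_matrix, Module.finrank_fintype_fun_eq_card]
  obtain ⟨g, hg⟩ := H.mulVecLin.exists_rightInverse_of_surjective hsurj
  refine ⟨LinearMap.toMatrix' g, Matrix.toLin'.injective ?_⟩
  rw [Matrix.toLin'_mul, Matrix.toLin'_toMatrix', Matrix.toLin'_one, ← hg]
  rfl

end Generic

section KerIn

variable {K ι κ : Type*} [Field K] [Fintype κ] (Q : Type*) [AddCommGroup Q]
  [Module K Q]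

/-- The `Q`-valued solutions `λ : κ → Q` of `H λ = 0`. -/
noncomputable def Matrix.kerIn (H : Matrix ι κ K) : Submodule K (κ → Q) :=
  ⨅ i, LinearMap.ker (LinearMap.applyₗ (H i) ∘ₗ (Module.piEquiv κ K Q).toLinearMap)

variable {Q}

theorem Matrix.mem_kerIn {H : Matrix ι κ K} {l : κ → Q} :
    l ∈ H.kerIn Q ↔ ∀ i, ∑ j, H i j • l j = 0 := by
  simp [Matrix.kerIn, Submodule.mem_iInf, Module.piEquiv_apply_apply]

theorem Matrix.finrank_kerIn [Finite ι] [FiniteDimensional K Q] (H : Matrix ι κ K) :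
    Module.finrank K (H.kerIn Q) =
      Module.finrank K Q * Module.finrank K (LinearMap.ker H.mulVecLin) := by
  classical
  have hrank := H.mulVecLin.finrank_range_add_finrank_ker
  rw [← Matrix.rank, rank_eq_finrank_span_row] at hrank
  set W := Submodule.span K (Set.range H.row)
  -- a solution is a linear map `K^κ → Q` vanishing on the rows of `H`, i.e. a map on `K^κ ⧸ W`
  have hker : H.kerIn Q = (LinearMap.range (LinearMap.lcomp K Q W.mkQ)).comap
      (Module.piEquiv κ K Q).toLinearMap := by
    ext l
    simp only [Submodule.mem_comap, LinearMap.mem_range, LinearMap.lcomp_apply', mem_kerIn,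
      ← Module.piEquiv_apply_apply, LinearEquiv.coe_coe]
    constructor
    · intro h
      exact ⟨W.liftQ _ (Submodule.span_le.2 (Set.range_subset_iff.2 h)), W.liftQ_mkQ _ _⟩
    · rintro ⟨g, hg⟩ i
      rw [← hg, LinearMap.comp_apply, Submodule.mkQ_apply,
        (Submodule.Quotient.mk_eq_zero W (x := H i)).2 (Submodule.subset_span ⟨i, rfl⟩),
        map_zero]
  have hinj : Function.Injective (LinearMap.lcomp K Q W.mkQ) := fun f g h =>
    Submodule.linearMap_qext W h
  rw [hker, Submodule.comap_equiv_eq_map_symm, LinearEquiv.finrank_map_eq,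
    LinearMap.finrank_range_of_inj hinj, Module.finrank_linearMap, mul_comm]
  congr 1
  have hquot := W.finrank_quotient_add_finrank
  omega

end KerIn

section Blocks

variable {α ι κ μ ν : Type*}

def blockVec (X : Matrix ι κ α) (Y : Matrix μ ν α) : (ι × κ) ⊕ (μ × ν) → α :=
  Sum.elim (fun p => X p.1 p.2) (fun p => Y p.1 p.2)

@[simp]
theorem blockVec_inl (X : Matrix ι κ α) (Y : Matrix μ ν α) (a : ι) (b : κ) :
    blockVec X Y (.inl (a, b)) = X a b :=
  rfl

@[simp]
theorem blockVec_inr (X : Matrix ι κ α) (Y : Matrix μ ν α) (c : μ) (d : ν) :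
    blockVec X Y (.inr (c, d)) = Y c d :=
  rfl

theorem exists_blockVec_eq (v : (ι × κ) ⊕ (μ × ν) → α) : ∃ X Y, blockVec X Y = v :=
  ⟨fun a b => v (.inl (a, b)), fun c d => v (.inr (c, d)), by ext (_ | _) <;> rfl⟩

theorem blockVec_inj {X X' : Matrix ι κ α} {Y Y' : Matrix μ ν α} :
    blockVec X Y = blockVec X' Y' ↔ X = X' ∧ Y = Y' := by
  simp [funext_iff, Sum.forall, ← Matrix.ext_iff]

theorem blockVec_zero [Zero α] : blockVec (0 : Matrix ι κ α) (0 : Matrix μ ν α) = 0 := by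
  ext (_ | _) <;> rfl

end Blocks

section Weight

variable {α ι κ μ ν : Type*} [Fintype ι] [Fintype κ] [DecidableEq α]

theorem hammingNorm_blockVec [Zero α] [Fintype μ] [Fintype ν] (X : Matrix ι κ α)
    (Y : Matrix μ ν α) :
    hammingNorm (blockVec X Y) =
      hammingNorm (fun p : ι × κ => X p.1 p.2) + hammingNorm (fun p : μ × ν => Y p.1 p.2) := by
  simp only [hammingNorm, Finset.card_filter]
  rw [Fintype.sum_sum_type]
  rfl

theorem hammingNorm_entries_eq_sum_col [Zero α] (X : Matrix ι κ α) :
    hammingNorm (fun p : ι × κ => X p.1 p.2) = ∑ b, hammingNorm (Xᵀ b) := by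
  simp only [hammingNorm, Finset.card_filter]
  rw [Fintype.sum_prod_type, Finset.sum_comm]
  rfl

theorem hammingNorm_entries_le_hammingNorm_blockVec [Zero α] [Fintype μ] [Fintype ν]
    (X : Matrix ι κ α) (Y : Matrix μ ν α) :
    hammingNorm (fun p : ι × κ => X p.1 p.2) ≤ hammingNorm (blockVec X Y) :=
  (hammingNorm_blockVec X Y).symm ▸ Nat.le_add_right _ _

theorem hammingNorm_blockVec_vecMulVec [MulZeroClass α] [NoZeroDivisors α] [Fintype μ]
    [Fintype ν] (a : ι → α) (b : κ → α) :
    hammingNorm (blockVec (vecMulVec a b) (0 : Matrix μ ν α)) = hammingNorm a * hammingNorm b := by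
  rw [hammingNorm_blockVec, hammingNorm, hammingNorm, hammingNorm, hammingNorm,
    ← Finset.card_product, ← Finset.filter_product, Finset.univ_product_univ]
  simp [vecMulVec_apply]

theorem hammingNorm_mulVec_le [NonUnitalNonAssocSemiring α] (X : Matrix ι κ α) (x : κ → α) :
    hammingNorm (X *ᵥ x) ≤ hammingNorm (fun p : ι × κ => X p.1 p.2) := by
  classical
  refine (Finset.card_le_card (t := Finset.image Prod.fst _) fun i hi => ?_).trans
    Finset.card_image_le
  obtain ⟨b, hb⟩ : ∃ b, X i b ≠ 0 := by
    by_contra! h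
    simp [mulVec, dotProduct, h] at hi
  exact Finset.mem_image.2 ⟨(i, b), by simpa using hb, rfl⟩

theorem mul_hammingNorm_le_sum_col [Zero α] {X : Matrix ι κ α} {g : κ → α} {d : ℕ}
    (h : ∀ b, g b ≠ 0 → d ≤ hammingNorm (Xᵀ b)) :
    d * hammingNorm g ≤ ∑ b, hammingNorm (Xᵀ b) := by
  rw [hammingNorm, mul_comm, Finset.card_eq_sum_ones, Finset.sum_mul, one_mul]
  exact (Finset.sum_le_sum fun b hb => h b (Finset.mem_filter.1 hb).2).trans
    (Finset.sum_le_sum_of_subset (Finset.filter_subset _ _))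

end Weight

section DualThickening

variable {nX nZ n r nc : ℕ} (HX : Matrix (Fin nX) (Fin n) (ZMod 2))
  (HZ : Matrix (Fin nZ) (Fin n) (ZMod 2)) (HC : Matrix (Fin r) (Fin nc) (ZMod 2))

theorem dualThickX_mulVec_blockVec (X : Matrix (Fin n) (Fin nc) (ZMod 2))
    (Y : Matrix (Fin nZ) (Fin r) (ZMod 2)) :
    dualThickX HX HZ HC *ᵥ blockVec X Y = blockVec (HX * X) (X * HCᵀ + HZᵀ * Y) := by
  ext (⟨a, c⟩ | ⟨i, j⟩) <;>
    simp [dualThickX, mulVec, dotProduct, Fintype.sum_sum_type, Fintype.sum_prod_type, mul_apply,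
      ite_mul, Finset.sum_ite_eq', Finset.sum_comm (γ := Fin n), mul_comm]

theorem dualThickZ_mulVec_blockVec (X : Matrix (Fin n) (Fin nc) (ZMod 2))
    (Y : Matrix (Fin nZ) (Fin r) (ZMod 2)) :
    dualThickZ HZ HC *ᵥ blockVec X Y = fun p => (HZ * X + Y * HC) p.1 p.2 := by
  ext ⟨z, c⟩
  simp [dualThickZ, mulVec, dotProduct, Fintype.sum_sum_type, Fintype.sum_prod_type, mul_apply,
      ite_mul, Finset.sum_ite_eq', Finset.sum_comm (γ := Fin nZ), mul_comm]

theorem vecMul_dualThickZ (M : Matrix (Fin nZ) (Fin nc) (ZMod 2)) :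
    (fun p => M p.1 p.2) ᵥ* dualThickZ HZ HC = blockVec (HZᵀ * M) (M * HCᵀ) := by
  ext (⟨i, c⟩ | ⟨z, j⟩) <;>
    simp [dualThickZ, vecMul, dotProduct, Fintype.sum_prod_type, mul_apply, mul_ite, mul_comm]

theorem blockVec_vecMul_dualThickX (A : Matrix (Fin nX) (Fin nc) (ZMod 2))
    (B : Matrix (Fin n) (Fin r) (ZMod 2)) :
    blockVec A B ᵥ* dualThickX HX HZ HC = blockVec (HXᵀ * A + B * HC) (HZ * B) := by
  ext (⟨i, c⟩ | ⟨z, j⟩) <;>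
    simp [dualThickX, vecMul, dotProduct, Fintype.sum_sum_type, Fintype.sum_prod_type, mul_apply,
      Finset.sum_comm (γ := Fin n), mul_comm]

variable {HX HZ HC} {X : Matrix (Fin n) (Fin nc) (ZMod 2)} {Y : Matrix (Fin nZ) (Fin r) (ZMod 2)}

theorem blockVec_mem_kerMat_dualThickX :
    blockVec X Y ∈ kerMat (dualThickX HX HZ HC) ↔ HX * X = 0 ∧ X * HCᵀ = HZᵀ * Y := by
  rw [mem_kerMat_iff, dualThickX_mulVec_blockVec, ← blockVec_zero, blockVec_inj,
    add_eq_zero_iff_eq_neg, ZModModule.neg_eq_self]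

theorem blockVec_mem_kerMat_dualThickZ :
    blockVec X Y ∈ kerMat (dualThickZ HZ HC) ↔ HZ * X = Y * HC := by
  rw [mem_kerMat_iff, dualThickZ_mulVec_blockVec, ← ZModModule.neg_eq_self (Y * HC),
    ← add_eq_zero_iff_eq_neg]
  simp [funext_iff, ← Matrix.ext_iff]

theorem blockVec_mem_rowSpan_dualThickZ :
    blockVec X Y ∈ rowSpan (dualThickZ HZ HC) ↔
      ∃ M : Matrix (Fin nZ) (Fin nc) (ZMod 2), HZᵀ * M = X ∧ M * HCᵀ = Y := by
  rw [mem_rowSpan_iff]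
  constructor
  · rintro ⟨x, hx⟩
    rw [show x = fun p => Matrix.of (fun z c => x (z, c)) p.1 p.2 from rfl, vecMul_dualThickZ,
      blockVec_inj] at hx
    exact ⟨_, hx⟩
  · rintro ⟨M, rfl, rfl⟩
    exact ⟨_, vecMul_dualThickZ HZ HC M⟩

theorem blockVec_mem_rowSpan_dualThickX :
    blockVec X Y ∈ rowSpan (dualThickX HX HZ HC) ↔
      ∃ (A : Matrix (Fin nX) (Fin nc) (ZMod 2)) (B : Matrix (Fin n) (Fin r) (ZMod 2)),
        HXᵀ * A + B * HC = X ∧ HZ * B = Y := by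
  rw [mem_rowSpan_iff]
  constructor
  · rintro ⟨u, hu⟩
    obtain ⟨A, B, rfl⟩ := exists_blockVec_eq u
    rw [blockVec_vecMul_dualThickX, blockVec_inj] at hu
    exact ⟨A, B, hu⟩
  · rintro ⟨A, B, rfl, rfl⟩
    exact ⟨_, blockVec_vecMul_dualThickX HX HZ HC A B⟩

theorem dualThickX_mul_transpose_dualThickZ (hcss : HX * HZᵀ = 0) :
    dualThickX HX HZ HC * (dualThickZ HZ HC)ᵀ = 0 := by
  refine ext_iff_mulVec.2 fun x => ?_
  rw [← mulVec_vecMul, zero_mulVec,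
    show x = fun p => Matrix.of (fun z c => x (z, c)) p.1 p.2 from rfl, vecMul_dualThickZ,
    dualThickX_mulVec_blockVec, ← Matrix.mul_assoc, hcss, Matrix.zero_mul, Matrix.mul_assoc,
    ZModModule.add_self, blockVec_zero]

variable {R : Matrix (Fin nc) (Fin r) (ZMod 2)}

theorem blockVec_mem_rowSpan_dualThickZ_of_col_mem (hR : HC * R = 1)
    (hker : blockVec X Y ∈ kerMat (dualThickX HX HZ HC)) (hcol : ∀ c, Xᵀ c ∈ rowSpan HZ) :
    blockVec X Y ∈ rowSpan (dualThickZ HZ HC) := by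
  obtain ⟨-, hXY⟩ := blockVec_mem_kerMat_dualThickX.1 hker
  obtain ⟨M, rfl⟩ := forall_col_mem_rowSpan_iff.1 hcol
  -- `HZᵀ` kills the correction `(Y - M HCᵀ) Rᵀ` by `hXY`, and `Rᵀ` is a right inverse of `HCᵀ`
  refine blockVec_mem_rowSpan_dualThickZ.2 ⟨M + (Y - M * HCᵀ) * Rᵀ, ?_, ?_⟩
  · rw [Matrix.mul_add, ← Matrix.mul_assoc, Matrix.mul_sub, ← hXY, Matrix.mul_assoc, sub_self,
      Matrix.zero_mul, add_zero]
  · rw [Matrix.add_mul, Matrix.mul_assoc _ Rᵀ, ← transpose_mul, hR, transpose_one, Matrix.mul_one,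
      add_sub_cancel]

theorem blockVec_mem_rowSpan_dualThickX_of_mulVec_mem (hR : HC * R = 1)
    (hker : blockVec X Y ∈ kerMat (dualThickZ HZ HC))
    (hX : ∀ κ, HC *ᵥ κ = 0 → X *ᵥ κ ∈ rowSpan HX) :
    blockVec X Y ∈ rowSpan (dualThickX HX HZ HC) := by
  have hXY := blockVec_mem_kerMat_dualThickZ.1 hker
  -- `X = X (1 - R HC) + (X R) HC`, and the columns of `1 - R HC` lie in `ker HC`
  have hP : HC * (1 - R * HC) = 0 := by
    rw [Matrix.mul_sub, Matrix.mul_one, ← Matrix.mul_assoc, hR, Matrix.one_mul, sub_self]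
  obtain ⟨A, hA⟩ := (forall_col_mem_rowSpan_iff (N := X * (1 - R * HC))).1 fun c => by
    rw [transpose_mul_apply_eq_mulVec]
    exact hX _ (by rw [← transpose_mul_apply_eq_mulVec, hP]; rfl)
  refine blockVec_mem_rowSpan_dualThickX.2 ⟨A, X * R, ?_, ?_⟩
  · rw [hA, Matrix.mul_sub, Matrix.mul_one, Matrix.mul_assoc, sub_add_cancel]
  · rw [← Matrix.mul_assoc, hXY, Matrix.mul_assoc, hR, Matrix.mul_one]

theorem blockVec_vecMulVec_mem_logicalSet_dualThickX {v : Fin n → ZMod 2} {κ : Fin nc → ZMod 2}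
    (hv : v ∈ logicalSet HX HZ) (hκ : HC *ᵥ κ = 0) (hκ0 : κ ≠ 0) :
    blockVec (vecMulVec v κ) (0 : Matrix (Fin nZ) (Fin r) (ZMod 2)) ∈
      logicalSet (dualThickX HX HZ HC) (dualThickZ HZ HC) := by
  obtain ⟨c, hc⟩ := Function.ne_iff.1 hκ0
  refine ⟨blockVec_mem_kerMat_dualThickX.2 ⟨?_, ?_⟩, fun h => hv.2 ?_⟩
  · rw [mul_vecMulVec, hv.1, zero_vecMulVec]
  · rw [vecMulVec_mul, vecMul_transpose, hκ, Matrix.mul_zero]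
    ext
    simp [vecMulVec_apply]
  · obtain ⟨M, hM, -⟩ := blockVec_mem_rowSpan_dualThickZ.1 h
    rw [← Submodule.smul_mem_iff _ hc, ← transpose_vecMulVec_apply, ← hM]
    exact forall_col_mem_rowSpan_iff.2 ⟨M, rfl⟩ c

theorem mul_le_hammingNorm_of_mem_logicalSet_dualThickX (hR : HC * R = 1)
    {w : (Fin n × Fin nc) ⊕ (Fin nZ × Fin r) → ZMod 2}
    (hw : w ∈ logicalSet (dualThickX HX HZ HC) (dualThickZ HZ HC)) :
    minWt (logicalSet HX HZ) * minWt {κ : Fin nc → ZMod 2 | HC *ᵥ κ = 0 ∧ κ ≠ 0} ≤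
      hammingNorm w := by
  obtain ⟨X, Y, rfl⟩ := exists_blockVec_eq w
  obtain ⟨hker, hspan⟩ := hw
  obtain ⟨hX, hXY⟩ := blockVec_mem_kerMat_dualThickX.1 hker
  obtain ⟨c₁, hc₁⟩ : ∃ c, Xᵀ c ∉ rowSpan HZ := by
    by_contra! h
    exact hspan (blockVec_mem_rowSpan_dualThickZ_of_col_mem hR hker h)
  obtain ⟨φ, hφ, hφc₁⟩ : ∃ φ, HZ *ᵥ φ = 0 ∧ φ ⬝ᵥ Xᵀ c₁ ≠ 0 := by
    simpa [mem_rowSpan_iff_forall_dotProduct_eq_zero] using hc₁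
  -- `φ ᵥ* X` is a codeword of `HC` supported on columns of `X` that are Z logical operators
  have hg : HC *ᵥ (φ ᵥ* X) = 0 := by
    rw [← vecMul_transpose, vecMul_vecMul, hXY, ← vecMul_vecMul, vecMul_transpose, hφ,
      zero_vecMul]
  have hcol (c : Fin nc) (hc : (φ ᵥ* X) c ≠ 0) : Xᵀ c ∈ logicalSet HX HZ :=
    ⟨by rw [← transpose_mul_apply_eq_mulVec, hX]; rfl,
      fun hmem => hc (mem_rowSpan_iff_forall_dotProduct_eq_zero.1 hmem φ hφ)⟩
  have hg_mem : φ ᵥ* X ∈ {κ : Fin nc → ZMod 2 | HC *ᵥ κ = 0 ∧ κ ≠ 0} :=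
    ⟨hg, Function.ne_iff.2 ⟨c₁, hφc₁⟩⟩
  calc _ ≤ minWt (logicalSet HX HZ) * hammingNorm (φ ᵥ* X) :=
        Nat.mul_le_mul_left _ (minWt_le hg_mem)
    _ ≤ ∑ c, hammingNorm (Xᵀ c) := mul_hammingNorm_le_sum_col fun c hc => minWt_le (hcol c hc)
    _ = hammingNorm (fun p : Fin n × Fin nc => X p.1 p.2) := (hammingNorm_entries_eq_sum_col X).symm
    _ ≤ hammingNorm (blockVec X Y) := hammingNorm_entries_le_hammingNorm_blockVec X Y

theorem minWt_logicalSet_dualThickX_dualThickZ (hR : HC * R = 1)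
    (hkc : ∃ κ : Fin nc → ZMod 2, HC *ᵥ κ = 0 ∧ κ ≠ 0) (hZlog : (logicalSet HX HZ).Nonempty) :
    minWt (logicalSet (dualThickX HX HZ HC) (dualThickZ HZ HC)) =
      minWt (logicalSet HX HZ) * minWt {κ : Fin nc → ZMod 2 | HC *ᵥ κ = 0 ∧ κ ≠ 0} := by
  obtain ⟨v, hv, hv_wt⟩ := exists_hammingNorm_eq_minWt hZlog
  obtain ⟨κ, hκ, hκ_wt⟩ :=
    exists_hammingNorm_eq_minWt (S := {κ : Fin nc → ZMod 2 | HC *ᵥ κ = 0 ∧ κ ≠ 0}) hkc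
  have hmem := blockVec_vecMulVec_mem_logicalSet_dualThickX (HC := HC) hv hκ.1 hκ.2
  refine le_antisymm ?_ (le_minWt ⟨_, hmem⟩ fun w hw =>
    mul_le_hammingNorm_of_mem_logicalSet_dualThickX hR hw)
  rw [← hv_wt, ← hκ_wt, ← hammingNorm_blockVec_vecMulVec (μ := Fin nZ) (ν := Fin r)]
  exact minWt_le hmem

theorem blockVec_vecMulVec_single_mem_logicalSet_dualThickZ {v : Fin n → ZMod 2}
    {κ : Fin nc → ZMod 2} {c : Fin nc} (hv : v ∈ logicalSet HZ HX) (hκ : HC *ᵥ κ = 0)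
    (hc : κ c ≠ 0) :
    blockVec (vecMulVec v (Pi.single c 1)) (0 : Matrix (Fin nZ) (Fin r) (ZMod 2)) ∈
      logicalSet (dualThickZ HZ HC) (dualThickX HX HZ HC) := by
  refine ⟨blockVec_mem_kerMat_dualThickZ.2 ?_, fun h => hv.2 ?_⟩
  · rw [mul_vecMulVec, hv.1, zero_vecMulVec, Matrix.zero_mul]
  · obtain ⟨A, B, hAB, -⟩ := blockVec_mem_rowSpan_dualThickX.1 h
    have hκv : vecMulVec v (Pi.single c 1) *ᵥ κ = κ c • v := by
      rw [vecMulVec_mulVec, single_one_dotProduct, op_smul_eq_smul]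
    rw [← Submodule.smul_mem_iff _ hc, ← hκv, ← hAB, add_mulVec, ← mulVec_mulVec κ B, hκ,
      mulVec_zero, add_zero, ← mulVec_mulVec, mulVec_transpose]
    exact vecMul_mem_rowSpan HX _

theorem minWt_le_hammingNorm_of_mem_logicalSet_dualThickZ (hR : HC * R = 1)
    {w : (Fin n × Fin nc) ⊕ (Fin nZ × Fin r) → ZMod 2}
    (hw : w ∈ logicalSet (dualThickZ HZ HC) (dualThickX HX HZ HC)) :
    minWt (logicalSet HZ HX) ≤ hammingNorm w := by
  obtain ⟨X, Y, rfl⟩ := exists_blockVec_eq w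
  obtain ⟨hker, hspan⟩ := hw
  obtain ⟨κ, hκ, hXκ⟩ : ∃ κ, HC *ᵥ κ = 0 ∧ X *ᵥ κ ∉ rowSpan HX := by
    by_contra! h
    exact hspan (blockVec_mem_rowSpan_dualThickX_of_mulVec_mem hR hker h)
  have hXκ_ker : HZ *ᵥ (X *ᵥ κ) = 0 := by
    rw [mulVec_mulVec, blockVec_mem_kerMat_dualThickZ.1 hker, ← mulVec_mulVec, hκ, mulVec_zero]
  calc minWt (logicalSet HZ HX) ≤ hammingNorm (X *ᵥ κ) := minWt_le ⟨hXκ_ker, hXκ⟩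
    _ ≤ hammingNorm (fun p : Fin n × Fin nc => X p.1 p.2) := hammingNorm_mulVec_le X κ
    _ ≤ hammingNorm (blockVec X Y) := hammingNorm_entries_le_hammingNorm_blockVec X Y

theorem minWt_logicalSet_dualThickZ_dualThickX (hR : HC * R = 1)
    (hkc : ∃ κ : Fin nc → ZMod 2, HC *ᵥ κ = 0 ∧ κ ≠ 0) (hXlog : (logicalSet HZ HX).Nonempty) :
    minWt (logicalSet (dualThickZ HZ HC) (dualThickX HX HZ HC)) = minWt (logicalSet HZ HX) := by
  obtain ⟨v, hv, hv_wt⟩ := exists_hammingNorm_eq_minWt hXlog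
  obtain ⟨κ, hκ, hκ0⟩ := hkc
  obtain ⟨c, hc⟩ := Function.ne_iff.1 hκ0
  have hmem := blockVec_vecMulVec_single_mem_logicalSet_dualThickZ (HX := HX) hv hκ hc
  refine le_antisymm ?_ (le_minWt ⟨_, hmem⟩ fun w hw =>
    minWt_le_hammingNorm_of_mem_logicalSet_dualThickZ hR hw)
  calc _ ≤ _ := minWt_le hmem
    _ = minWt (logicalSet HZ HX) := by
      rw [hammingNorm_blockVec_vecMulVec, ← hv_wt]
      simp [hammingNorm, Pi.single_apply, Finset.filter_eq']

end DualThickening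

section Dimension

abbrev LogicalSpace {ι₁ ι₂ κ : Type*} [Fintype ι₁] [Fintype ι₂] [Fintype κ]
    (HX : Matrix ι₁ κ (ZMod 2)) (HZ : Matrix ι₂ κ (ZMod 2)) : Type _ :=
  ↥(kerMat HX) ⧸ (rowSpan HZ).comap (kerMat HX).subtype

theorem sum_smul_mk_eq_zero_iff {ι₁ ι₂ κ ι : Type*} [Fintype ι₁] [Fintype ι₂] [Fintype κ]
    [Fintype ι] {HX : Matrix ι₁ κ (ZMod 2)} {HZ : Matrix ι₂ κ (ZMod 2)} (a : ι → ZMod 2)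
    (t : ι → kerMat HX) :
    ∑ c, a c • (Submodule.Quotient.mk (t c) : LogicalSpace HX HZ) = 0 ↔
      ∑ c, a c • (t c : κ → ZMod 2) ∈ rowSpan HZ := by
  simp_rw [← Submodule.mkQ_apply, ← map_smul, ← map_sum, Submodule.mkQ_apply,
    Submodule.Quotient.mk_eq_zero, Submodule.mem_comap, Submodule.subtype_apply,
    Submodule.coe_sum, Submodule.coe_smul]

variable {nX nZ n r nc : ℕ} (HX : Matrix (Fin nX) (Fin n) (ZMod 2))
  (HZ : Matrix (Fin nZ) (Fin n) (ZMod 2)) (HC : Matrix (Fin r) (Fin nc) (ZMod 2))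

theorem col_mem_kerMat_of_mem_kerMat_dualThickX
    {v : (Fin n × Fin nc) ⊕ (Fin nZ × Fin r) → ZMod 2} (hv : v ∈ kerMat (dualThickX HX HZ HC))
    (c : Fin nc) : (fun i => v (.inl (i, c))) ∈ kerMat HX := by
  obtain ⟨X, Y, rfl⟩ := exists_blockVec_eq v
  rw [mem_kerMat_iff, show (fun i => blockVec X Y (.inl (i, c))) = Xᵀ c from rfl,
    ← transpose_mul_apply_eq_mulVec, (blockVec_mem_kerMat_dualThickX.1 hv).1]
  rfl

noncomputable def logicalColumns :
    kerMat (dualThickX HX HZ HC) →ₗ[ZMod 2] (Fin nc → LogicalSpace HX HZ) :=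
  LinearMap.pi fun c => Submodule.mkQ _ ∘ₗ
    (LinearMap.funLeft (ZMod 2) (ZMod 2) fun i => Sum.inl (i, c)).restrict
      fun _ hv => col_mem_kerMat_of_mem_kerMat_dualThickX HX HZ HC hv c

theorem logicalColumns_blockVec {X : Matrix (Fin n) (Fin nc) (ZMod 2)}
    {Y : Matrix (Fin nZ) (Fin r) (ZMod 2)} (hv : blockVec X Y ∈ kerMat (dualThickX HX HZ HC))
    (c : Fin nc) :
    logicalColumns HX HZ HC ⟨_, hv⟩ c =
      Submodule.Quotient.mk ⟨Xᵀ c, col_mem_kerMat_of_mem_kerMat_dualThickX HX HZ HC hv c⟩ :=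
  rfl

theorem ker_logicalColumns {R : Matrix (Fin nc) (Fin r) (ZMod 2)} (hR : HC * R = 1) :
    LinearMap.ker (logicalColumns HX HZ HC) =
      (rowSpan (dualThickZ HZ HC)).comap (kerMat (dualThickX HX HZ HC)).subtype := by
  ext ⟨v, hv⟩
  obtain ⟨X, Y, rfl⟩ := exists_blockVec_eq v
  simp only [LinearMap.mem_ker, funext_iff, logicalColumns_blockVec, Pi.zero_apply,
    Submodule.Quotient.mk_eq_zero, Submodule.mem_comap, Submodule.subtype_apply]
  refine ⟨blockVec_mem_rowSpan_dualThickZ_of_col_mem hR hv, fun h c => ?_⟩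
  obtain ⟨M, rfl, -⟩ := blockVec_mem_rowSpan_dualThickZ.1 h
  exact forall_col_mem_rowSpan_iff.2 ⟨M, rfl⟩ c

theorem range_logicalColumns :
    LinearMap.range (logicalColumns HX HZ HC) = HC.kerIn (LogicalSpace HX HZ) := by
  ext l
  rw [LinearMap.mem_range, mem_kerIn]
  constructor
  · rintro ⟨⟨v, hv⟩, rfl⟩ j
    obtain ⟨X, Y, rfl⟩ := exists_blockVec_eq v
    obtain ⟨-, hXY⟩ := blockVec_mem_kerMat_dualThickX.1 hv
    simp only [logicalColumns_blockVec]
    rw [sum_smul_mk_eq_zero_iff]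
    have hrow : ∑ c, HC j c • Xᵀ c = (X * HCᵀ)ᵀ j := by
      rw [transpose_mul_apply_eq_mulVec, transpose_transpose, mulVec_eq_sum]
      simp [op_smul_eq_smul]
    rw [hrow, hXY]
    exact forall_col_mem_rowSpan_iff.2 ⟨Y, rfl⟩ j
  · intro hl
    choose t ht using fun c => Submodule.Quotient.mk_surjective _ (l c)
    set X : Matrix (Fin n) (Fin nc) (ZMod 2) := Matrix.of fun i c => (t c : Fin n → ZMod 2) i
    have hcols : ∀ j, (X * HCᵀ)ᵀ j ∈ rowSpan HZ := by
      intro j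
      have := hl j
      simp only [← ht, sum_smul_mk_eq_zero_iff] at this
      convert this using 1
      rw [transpose_mul_apply_eq_mulVec, transpose_transpose, mulVec_eq_sum]
      simp only [op_smul_eq_smul]
      rfl
    obtain ⟨Y, hY⟩ := forall_col_mem_rowSpan_iff.1 hcols
    have hv : blockVec X Y ∈ kerMat (dualThickX HX HZ HC) :=
      blockVec_mem_kerMat_dualThickX.2 ⟨by ext i c; exact congrFun (t c).2 i, hY.symm⟩
    exact ⟨⟨_, hv⟩, funext fun c => (ht c) ▸ rfl⟩

theorem logicalDim_dualThick {R : Matrix (Fin nc) (Fin r) (ZMod 2)} (hR : HC * R = 1) :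
    logicalDim (dualThickX HX HZ HC) (dualThickZ HZ HC) =
      logicalDim HX HZ * Module.finrank (ZMod 2) (LinearMap.ker HC.mulVecLin) := by
  rw [logicalDim, ← ker_logicalColumns HX HZ HC hR,
    (logicalColumns HX HZ HC).quotKerEquivRange.finrank_eq, range_logicalColumns,
    finrank_kerIn]
  rfl

end Dimension

/-- **Dual-basis thickening:** the resulting CSS code has `k·k_c` logical qubits,
Z distance `d_Z · d_c` and X distance `d_X`. -/
theorem dual_thickening {nX nZ n r nc : ℕ}
    (HX : Matrix (Fin nX) (Fin n) (ZMod 2)) (HZ : Matrix (Fin nZ) (Fin n) (ZMod 2))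
    (HC : Matrix (Fin r) (Fin nc) (ZMod 2))
    (hcss : HX * HZ.transpose = 0)
    (hrank : LinearIndependent (ZMod 2) (fun i : Fin r => HC i))
    (hkc : ∃ v : Fin nc → ZMod 2, HC.mulVec v = 0 ∧ v ≠ 0)
    (hXlog : (logicalSet HZ HX).Nonempty) (hZlog : (logicalSet HX HZ).Nonempty) :
    dualThickX HX HZ HC * (dualThickZ HZ HC).transpose = 0 ∧
      logicalDim (dualThickX HX HZ HC) (dualThickZ HZ HC) =
        logicalDim HX HZ * Module.finrank (ZMod 2) (LinearMap.ker HC.mulVecLin) ∧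
      minWt (logicalSet (dualThickX HX HZ HC) (dualThickZ HZ HC)) =
        minWt (logicalSet HX HZ) *
          sInf (hammingNorm '' {v : Fin nc → ZMod 2 | HC.mulVec v = 0 ∧ v ≠ 0}) ∧
      minWt (logicalSet (dualThickZ HZ HC) (dualThickX HX HZ HC)) =
        minWt (logicalSet HZ HX) := by
  obtain ⟨R, hR⟩ := exists_mul_eq_one_of_linearIndependent_row hrank
  exact ⟨dualThickX_mul_transpose_dualThickZ hcss, logicalDim_dualThick HX HZ HC hR,
    minWt_logicalSet_dualThickX_dualThickZ hR hkc hZlog,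
    minWt_logicalSet_dualThickZ_dualThickX hR hkc hXlog⟩
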